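/- arXiv:1901.03384 — 4 statements merged into one kernel-verified Lean document; each statement's English description precedes it below -/
import Mathlib

section
/- For λ > 0 and m ≥ 1, the functions s(λ) = ((-1)^m (2m-1)!/√λ)(sin λ − Σ_{j=0}^{m-1} (-1)^j λ^(2j+1)/(2j+1)!) and t(λ) = ((-1)^(m+1) (2m)!/√λ)(cos λ − Σ_{j=0}^{m} (-1)^j λ^(2j)/(2j)!) satisfy the differential relation t'(λ) + t(λ)/(2λ) = 2m · s(λ) for all λ > 0. -/
open Real Finset

/-! Writing `t = C / √λ · (cos λ - T λ)` with `T` the Taylor polynomial of `cos` of degree `2m`,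
the derivative of `cos - T` is `-(sin - S)` with `S` the Taylor polynomial of `sin` of degree
`2m - 1`, and differentiating `λ^(-1/2)` produces `-t / (2λ)`. What remains is
`C = (-1)^(m+1) (2m)! = -2m · (-1)^m (2m - 1)!`. -/

noncomputable def sFun (m : ℕ) (z : ℝ) : ℝ :=
  ((-1 : ℝ) ^ m * (Nat.factorial (2 * m - 1)) / Real.sqrt z) *
    (Real.sin z - ∑ j ∈ Finset.range m,
        (-1 : ℝ) ^ j * z ^ (2 * j + 1) / (Nat.factorial (2 * j + 1)))

noncomputable def tFun (m : ℕ) (z : ℝ) : ℝ :=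
  ((-1 : ℝ) ^ (m + 1) * (Nat.factorial (2 * m)) / Real.sqrt z) *
    (Real.cos z - ∑ j ∈ Finset.range (m + 1),
        (-1 : ℝ) ^ j * z ^ (2 * j) / (Nat.factorial (2 * j)))

-- Taylor polynomials with `n` nonzero terms, of degrees `2n - 2` and `2n - 1`.
noncomputable def cosTaylor (n : ℕ) (z : ℝ) : ℝ :=
  ∑ j ∈ range n, (-1 : ℝ) ^ j * z ^ (2 * j) / (Nat.factorial (2 * j))

noncomputable def sinTaylor (n : ℕ) (z : ℝ) : ℝ :=
  ∑ j ∈ range n, (-1 : ℝ) ^ j * z ^ (2 * j + 1) / (Nat.factorial (2 * j + 1))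

theorem hasDerivAt_cosTaylor_term (n : ℕ) (x : ℝ) :
    HasDerivAt (fun z : ℝ => (-1 : ℝ) ^ (n + 1) * z ^ (2 * (n + 1)) / (Nat.factorial (2 * (n + 1))))
      (-((-1 : ℝ) ^ n * x ^ (2 * n + 1) / (Nat.factorial (2 * n + 1)))) x := by
  refine (((hasDerivAt_pow (2 * (n + 1)) x).const_mul _).div_const _).congr_deriv ?_
  have hfac : (Nat.factorial (2 * (n + 1)) : ℝ) = (2 * n + 2) * Nat.factorial (2 * n + 1) := by
    rw [show 2 * (n + 1) = 2 * n + 1 + 1 by ring, Nat.factorial_succ]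
    push_cast
    ring
  rw [hfac, show 2 * (n + 1) - 1 = 2 * n + 1 by omega]
  push_cast
  field_simp
  ring

theorem hasDerivAt_cosTaylor_succ (n : ℕ) (x : ℝ) :
    HasDerivAt (cosTaylor (n + 1)) (-sinTaylor n x) x := by
  induction n with
  | zero =>
    have hconst : cosTaylor 1 = fun _ => 1 := by
      funext z
      simp [cosTaylor]
    simpa [hconst, sinTaylor] using hasDerivAt_const x (1 : ℝ)
  | succ n ih =>
    have hsplit : cosTaylor (n + 1 + 1) = fun z => cosTaylor (n + 1) z +
        (-1 : ℝ) ^ (n + 1) * z ^ (2 * (n + 1)) / (Nat.factorial (2 * (n + 1))) := by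
      funext z
      exact sum_range_succ _ _
    rw [hsplit, sinTaylor, sum_range_succ, neg_add]
    exact ih.add (hasDerivAt_cosTaylor_term n x)

theorem HasDerivAt.const_div_sqrt_mul {g : ℝ → ℝ} {g' x : ℝ} (c : ℝ) (hg : HasDerivAt g g' x)
    (hx : 0 < x) :
    HasDerivAt (fun z => c / √z * g z) (c / √x * g' - c / √x * g x / (2 * x)) x := by
  have hsqrt : √x ≠ 0 := (sqrt_pos.mpr hx).ne'
  refine (((hasDerivAt_const x c).fun_div (hasDerivAt_sqrt hx.ne') hsqrt).fun_mul hg).congr_deriv ?_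
  have hsq : √x ^ 2 = x := sq_sqrt hx.le
  field_simp
  rw [hsq]
  ring

theorem stmt_6 (m : ℕ) (hm : 1 ≤ m) (lam : ℝ) (hlam : 0 < lam) :
    HasDerivAt (tFun m) (2 * m * sFun m lam - tFun m lam / (2 * lam)) lam := by
  have hfac : ((2 * m).factorial : ℝ) = 2 * m * (2 * m - 1).factorial := by
    rw [← Nat.mul_factorial_pred (by omega : 2 * m ≠ 0)]
    push_cast [show 1 ≤ 2 * m by omega]
    ring
  refine (((hasDerivAt_cos lam).fun_sub (hasDerivAt_cosTaylor_succ m lam)).const_div_sqrt_mul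
    ((-1 : ℝ) ^ (m + 1) * (2 * m).factorial) hlam).congr_deriv ?_
  simp only [tFun, sFun, cosTaylor, sinTaylor, hfac]
  ring
end

section
/- Define S(x) = ∫₀^x sin(π t²/2) dt and C(x) = ∫₀^x cos(π t²/2) dt, and for z > 0 let χ = √(2z/π). Then S₀(z) = √(2π/z) · ( cos(z)(1/2 − S(χ)) − sin(z)(1/2 − C(χ)) ) satisfies z² S₀''(z) + z S₀'(z) + (z² − 1/4) S₀(z) = z for all z > 0. -/
open Real

noncomputable def fresnelS (x : ℝ) : ℝ := ∫ t in (0:ℝ)..x, Real.sin (π * t ^ 2 / 2)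
noncomputable def fresnelC (x : ℝ) : ℝ := ∫ t in (0:ℝ)..x, Real.cos (π * t ^ 2 / 2)

noncomputable def S0 (z : ℝ) : ℝ :=
  Real.sqrt (2 * π / z) *
    (Real.cos z * (1 / 2 - fresnelS (Real.sqrt (2 * z / π)))
      - Real.sin z * (1 / 2 - fresnelC (Real.sqrt (2 * z / π))))

/-! Substituting `y = w / √z` turns the Bessel operator of order `1/2`,
`z² y'' + z y' + (z² - 1/4) y`, into `z √z (w'' + w)`, so the claim is `w'' + w = 1/√z`
for `w = √(2π) f`, where `f` is the auxiliary Fresnel function taken at `χ = √(2z/π)`.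
Since `πχ²/2 = z` and `dχ/dz = 1/√(2πz)`, the auxiliary Fresnel functions `f, g` obey
`f' = -g` and `g' = f - 1/√(2πz)`, whence `f'' + f = 1/√(2πz)`. -/

open Filter Topology

theorem bessel_half_operator_div_sqrt {w w' : ℝ → ℝ} {z w'' : ℝ} (hz : 0 < z)
    (hw : ∀ᶠ x in 𝓝 z, HasDerivAt w (w' x) x) (hw' : HasDerivAt w' w'' z) :
    z ^ 2 * deriv (deriv fun x => w x / √x) z + z * deriv (fun x => w x / √x) z
        + (z ^ 2 - 1 / 4) * (w z / √z) = z * √z * (w'' + w z) := by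
  have hy : ∀ᶠ x in 𝓝 z,
      HasDerivAt (fun x => w x / √x) (w' x / √x - w x / (2 * x * √x)) x := by
    filter_upwards [hw, Ioi_mem_nhds hz] with x hwx (hx : 0 < x)
    have hsx : √x ≠ 0 := (sqrt_pos.2 hx).ne'
    refine (hwx.div (hasDerivAt_sqrt hx.ne') hsx).congr_deriv ?_
    field_simp
    rw [sq_sqrt hx.le]
    ring
  have hs : √z ≠ 0 := (sqrt_pos.2 hz).ne'
  have hy' : HasDerivAt (fun x => w' x / √x - w x / (2 * x * √x))
      (w'' / √z - w' z / (2 * z * √z)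
        - (w' z * (2 * z * √z) - w z * (3 * √z)) / (2 * z * √z) ^ 2) z := by
    have hden : HasDerivAt (fun x => 2 * x * √x) (3 * √z) z := by
      refine (((hasDerivAt_id' z).const_mul 2).mul (hasDerivAt_sqrt hz.ne')).congr_deriv ?_
      field_simp
      rw [sq_sqrt hz.le]
      ring
    refine ((hw'.div (hasDerivAt_sqrt hz.ne') hs).sub
      (hw.self_of_nhds.div hden (by positivity))).congr_deriv ?_
    field_simp
    rw [sq_sqrt hz.le]
    ring
  have hdy : deriv (fun x => w x / √x) =ᶠ[𝓝 z] fun x => w' x / √x - w x / (2 * x * √x) :=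
    hy.mono fun x hx => hx.deriv
  rw [hdy.deriv_eq, hy'.deriv, hy.self_of_nhds.deriv]
  field_simp
  rw [sq_sqrt hz.le]
  ring

theorem hasDerivAt_fresnelS (x : ℝ) : HasDerivAt fresnelS (sin (π * x ^ 2 / 2)) x := by
  have hc : Continuous fun t : ℝ => sin (π * t ^ 2 / 2) := by fun_prop
  exact intervalIntegral.integral_hasDerivAt_right (hc.intervalIntegrable _ _)
    (hc.stronglyMeasurableAtFilter _ _) hc.continuousAt

theorem hasDerivAt_fresnelC (x : ℝ) : HasDerivAt fresnelC (cos (π * x ^ 2 / 2)) x := by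
  have hc : Continuous fun t : ℝ => cos (π * t ^ 2 / 2) := by fun_prop
  exact intervalIntegral.integral_hasDerivAt_right (hc.intervalIntegrable _ _)
    (hc.stronglyMeasurableAtFilter _ _) hc.continuousAt

theorem pi_mul_sqrt_two_mul_div_pi_sq_div_two {z : ℝ} (hz : 0 ≤ z) :
    π * √(2 * z / π) ^ 2 / 2 = z := by
  rw [sq_sqrt (by positivity)]
  field_simp

theorem hasDerivAt_sqrt_two_mul_div_pi {z : ℝ} (hz : 0 < z) :
    HasDerivAt (fun x => √(2 * x / π)) (1 / √(2 * π * z)) z := by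
  refine ((((hasDerivAt_id' z).const_mul 2).div_const π).sqrt (by positivity)).congr_deriv ?_
  rw [show 2 * π * z = π ^ 2 * (2 * z / π) by field_simp, sqrt_mul (by positivity),
    sqrt_sq pi_pos.le]
  field_simp

theorem hasDerivAt_fresnelS_sqrt_two_mul_div_pi {z : ℝ} (hz : 0 < z) :
    HasDerivAt (fun x => fresnelS √(2 * x / π)) (sin z * (1 / √(2 * π * z))) z := by
  have h := (hasDerivAt_fresnelS _).comp z (hasDerivAt_sqrt_two_mul_div_pi hz)
  rwa [pi_mul_sqrt_two_mul_div_pi_sq_div_two hz.le] at h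

theorem hasDerivAt_fresnelC_sqrt_two_mul_div_pi {z : ℝ} (hz : 0 < z) :
    HasDerivAt (fun x => fresnelC √(2 * x / π)) (cos z * (1 / √(2 * π * z))) z := by
  have h := (hasDerivAt_fresnelC _).comp z (hasDerivAt_sqrt_two_mul_div_pi hz)
  rwa [pi_mul_sqrt_two_mul_div_pi_sq_div_two hz.le] at h

/- The auxiliary Fresnel functions `f`, `g` of DLMF 7.2.10–11, e.g.
`f(χ) = (1/2 - S χ) cos(πχ²/2) - (1/2 - C χ) sin(πχ²/2)`,
written in the variable `z = πχ²/2`. -/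
noncomputable def fresnelAuxF (z : ℝ) : ℝ :=
  cos z * (1 / 2 - fresnelS √(2 * z / π)) - sin z * (1 / 2 - fresnelC √(2 * z / π))

noncomputable def fresnelAuxG (z : ℝ) : ℝ :=
  sin z * (1 / 2 - fresnelS √(2 * z / π)) + cos z * (1 / 2 - fresnelC √(2 * z / π))

theorem hasDerivAt_fresnelAuxF {z : ℝ} (hz : 0 < z) :
    HasDerivAt fresnelAuxF (-fresnelAuxG z) z := by
  refine (((hasDerivAt_cos z).mul
    ((hasDerivAt_fresnelS_sqrt_two_mul_div_pi hz).const_sub _)).sub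
    ((hasDerivAt_sin z).mul
      ((hasDerivAt_fresnelC_sqrt_two_mul_div_pi hz).const_sub _))).congr_deriv ?_
  rw [fresnelAuxG]
  ring

theorem hasDerivAt_fresnelAuxG {z : ℝ} (hz : 0 < z) :
    HasDerivAt fresnelAuxG (fresnelAuxF z - 1 / √(2 * π * z)) z := by
  refine (((hasDerivAt_sin z).mul
    ((hasDerivAt_fresnelS_sqrt_two_mul_div_pi hz).const_sub _)).add
    ((hasDerivAt_cos z).mul
      ((hasDerivAt_fresnelC_sqrt_two_mul_div_pi hz).const_sub _))).congr_deriv ?_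
  rw [fresnelAuxF]
  linear_combination -(1 / √(2 * π * z)) * sin_sq_add_cos_sq z

theorem S0_eq_fresnelAuxF_div_sqrt : S0 = fun z => √(2 * π) * fresnelAuxF z / √z := by
  ext z
  rw [S0, sqrt_div (by positivity), fresnelAuxF]
  ring

theorem stmt_10 (z : ℝ) (hz : 0 < z) :
    z ^ 2 * deriv (deriv S0) z + z * deriv S0 z + (z ^ 2 - 1 / 4) * S0 z = z := by
  have hw : ∀ᶠ x in 𝓝 z,
      HasDerivAt (fun x => √(2 * π) * fresnelAuxF x) (√(2 * π) * -fresnelAuxG x) x := by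
    filter_upwards [Ioi_mem_nhds hz] with x hx
    exact (hasDerivAt_fresnelAuxF hx).const_mul _
  rw [S0_eq_fresnelAuxF_div_sqrt,
    bessel_half_operator_div_sqrt hz hw ((hasDerivAt_fresnelAuxG hz).neg.const_mul _),
    sqrt_mul (by positivity : (0:ℝ) ≤ 2 * π)]
  field_simp
  ring
end

section
/- For every positive real λ and every nonnegative integer m, ∫₀¹ z^(4m) sin(λ z²) dz = ((-1)^m Γ(2m+1/2) / (2 λ^(2m))) · ( √(2/λ) · S(√(2λ/π)) − sin(λ) Σ_{j=0}^{m-1} (−1)^j λ^(2j)/Γ(2j+3/2) + λ cos(λ) Σ_{j=0}^{m-1} (−1)^j λ^(2j)/Γ(2j+5/2) ). -/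
/-!
The substitution `t = z √(2λ/π)` turns `∫₀¹ sin (λ z²) dz` into a Fresnel integral. Integrating
`z ^ (k + 4) sin (λ z²)` by parts twice expresses it through `z ^ k sin (λ z²)` plus boundary terms,
and the closed form follows by induction on `m`: the factor `(4m + 3)(4m + 1) / 4` produced by each
step is `(2m + 3/2)(2m + 1/2)`, which `Γ (x + 1) = x Γ x` absorbs into the Gamma values.
-/

open Real Finset

theorem integral_sin_mul_sq_eq_fresnelS {lam : ℝ} (hlam : 0 < lam) (x : ℝ) :
    ∫ z in (0:ℝ)..x, Real.sin (lam * z ^ 2) =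
      √(π / (2 * lam)) * fresnelS (x * √(2 * lam / π)) := by
  set c := √(2 * lam / π)
  have hc : 0 < c := Real.sqrt_pos.mpr (by positivity)
  have hc_sq : c ^ 2 = 2 * lam / π := Real.sq_sqrt (by positivity)
  have hrescale (z : ℝ) : Real.sin (lam * z ^ 2) = Real.sin (π * (z * c) ^ 2 / 2) := by
    rw [mul_pow, hc_sq]
    field_simp
  simp_rw [hrescale]
  rw [intervalIntegral.integral_comp_mul_right (fun t => Real.sin (π * t ^ 2 / 2)) hc.ne',
    zero_mul, smul_eq_mul, fresnelS, ← Real.sqrt_inv, inv_div]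

theorem hasDerivAt_sin_mul_sq_reduction (lam : ℝ) (hlam : lam ≠ 0) (k : ℕ) (z : ℝ) :
    HasDerivAt
      (fun z => -z ^ (k + 3) * Real.cos (lam * z ^ 2) / (2 * lam)
        + (k + 3) * z ^ (k + 1) * Real.sin (lam * z ^ 2) / (4 * lam ^ 2))
      (z ^ (k + 4) * Real.sin (lam * z ^ 2)
        + (k + 3) * (k + 1) / (4 * lam ^ 2) * (z ^ k * Real.sin (lam * z ^ 2))) z := by
  have hq : HasDerivAt (fun z : ℝ => lam * z ^ 2) (lam * (2 * z)) z := by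
    simpa using (hasDerivAt_pow 2 z).const_mul lam
  have hsin := (Real.hasDerivAt_sin _).comp z hq
  have hcos := (Real.hasDerivAt_cos _).comp z hq
  have hp3 : HasDerivAt (fun z : ℝ => z ^ (k + 3)) ((k + 3) * z ^ (k + 2)) z := by
    simpa using hasDerivAt_pow (k + 3) z
  have hp1 : HasDerivAt (fun z : ℝ => z ^ (k + 1)) ((k + 1) * z ^ k) z := by
    simpa using hasDerivAt_pow (k + 1) z
  refine (((hp3.neg.mul hcos).div_const (2 * lam)).add
    (((hp1.const_mul ((k : ℝ) + 3)).mul hsin).div_const (4 * lam ^ 2))).congr_deriv ?_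
  simp only [Function.comp_apply, Pi.neg_apply]
  field_simp
  ring

theorem integral_pow_add_four_mul_sin_mul_sq (lam : ℝ) (hlam : lam ≠ 0) (k : ℕ) :
    ∫ z in (0:ℝ)..1, z ^ (k + 4) * Real.sin (lam * z ^ 2) =
      -Real.cos lam / (2 * lam) + (k + 3) * Real.sin lam / (4 * lam ^ 2)
        - (k + 3) * (k + 1) / (4 * lam ^ 2) * ∫ z in (0:ℝ)..1, z ^ k * Real.sin (lam * z ^ 2) := by
  have hint (n : ℕ) :
      IntervalIntegrable (fun z : ℝ => z ^ n * Real.sin (lam * z ^ 2)) MeasureTheory.volume 0 1 :=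
    (by fun_prop : Continuous fun z : ℝ => z ^ n * Real.sin (lam * z ^ 2)).intervalIntegrable _ _
  have hftc := intervalIntegral.integral_eq_sub_of_hasDerivAt
    (fun z _ => hasDerivAt_sin_mul_sq_reduction lam hlam k z) ((hint _).add ((hint k).const_mul _))
  rw [intervalIntegral.integral_add (hint _) ((hint k).const_mul _),
    intervalIntegral.integral_const_mul] at hftc
  norm_num at hftc
  linarith

theorem stmt_12 (lam : ℝ) (hlam : 0 < lam) (m : ℕ) :
    ∫ z in (0:ℝ)..1, z ^ (4 * m) * Real.sin (lam * z ^ 2) =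
      ((-1 : ℝ) ^ m * Real.Gamma (2 * m + 1 / 2) / (2 * lam ^ (2 * m))) *
        (Real.sqrt (2 / lam) * fresnelS (Real.sqrt (2 * lam / π))
          - Real.sin lam *
              ∑ j ∈ Finset.range m, (-1 : ℝ) ^ j * lam ^ (2 * j) / Real.Gamma (2 * j + 3 / 2)
          + lam * Real.cos lam *
              ∑ j ∈ Finset.range m, (-1 : ℝ) ^ j * lam ^ (2 * j) / Real.Gamma (2 * j + 5 / 2)) := by
  induction m with
  | zero =>
    have hsqrt : √(π / (2 * lam)) = √π * √(2 / lam) / 2 := by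
      rw [show π / (2 * lam) = π * (2 / lam) / 2 ^ 2 by field_simp,
        Real.sqrt_div' _ (by positivity), Real.sqrt_sq zero_le_two, Real.sqrt_mul Real.pi_pos.le]
    simp only [mul_zero, pow_zero, one_mul, Nat.cast_zero, zero_add, Real.Gamma_one_half_eq,
      range_zero, sum_empty, sub_zero, add_zero, mul_one]
    rw [integral_sin_mul_sq_eq_fresnelS hlam, one_mul, hsqrt]
    ring
  | succ m ih =>
    set G := Real.Gamma (2 * m + 1 / 2)
    have hG : 0 < G := Real.Gamma_pos_of_pos (by positivity)
    have hG₁ : Real.Gamma (2 * m + 3 / 2) = (2 * m + 1 / 2) * G := by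
      rw [← Real.Gamma_add_one (by positivity)]; ring_nf
    have hG₂ : Real.Gamma (2 * m + 5 / 2) = (2 * m + 3 / 2) * ((2 * m + 1 / 2) * G) := by
      rw [← hG₁, ← Real.Gamma_add_one (by positivity)]; ring_nf
    rw [show 4 * (m + 1) = 4 * m + 4 by ring, integral_pow_add_four_mul_sin_mul_sq lam hlam.ne', ih,
      sum_range_succ, sum_range_succ, pow_succ, show 2 * (m + 1) = 2 * m + 2 by ring, pow_add]
    push_cast
    rw [show 2 * ((m : ℝ) + 1) + 1 / 2 = 2 * m + 5 / 2 by ring, hG₂, hG₁]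
    rcases neg_one_pow_eq_or ℝ m with hsign | hsign <;> rw [hsign] <;> field_simp <;> ring
end

section
/- For every positive real λ and every nonnegative integer m, ∫₀¹ z^(4m+2) cos(λ z²) dz = ((-1)^(m+1) Γ(2m+3/2) / (2 λ^(2m+1))) · ( √(2/λ) · S(√(2λ/π)) + λ cos(λ) Σ_{j=0}^{m-1} (−λ²)^j/Γ(2j+5/2) − sin(λ) Σ_{j=0}^{m} (−λ²)^j/Γ(2j+3/2) ). -/
/-!
Write `C_k = ∫₀¹ z^k cos(λz²) dz` and `S_k = ∫₀¹ z^k sin(λz²) dz`. Integrating by parts against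
`d(sin(λz²)) = 2λz cos(λz²) dz` (and its cosine analogue) gives
`C_{k+4} = sin λ/(2λ) + (k+3) cos λ/(4λ²) - (k+1)(k+3)/(4λ²) C_k`, and at the bottom
`C_2 = (sin λ - S_0)/(2λ)`, where `t = √(2λ/π) z` turns `S_0` into a Fresnel integral.
The right-hand side satisfies the same recurrence, because
`Γ(2m+7/2) = (2m+5/2)(2m+3/2) Γ(2m+3/2)` and `(4m+3)(4m+5) = 4 (2m+3/2)(2m+5/2)`.
-/

open Real Finset intervalIntegral

section Moments

variable {lam : ℝ} (b : ℝ) (k : ℕ)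

theorem hasDerivAt_sin_mul_sq_div (hlam : lam ≠ 0) (x : ℝ) :
    HasDerivAt (fun z ↦ Real.sin (lam * z ^ 2) / (2 * lam)) (x * Real.cos (lam * x ^ 2)) x := by
  have h := (((hasDerivAt_pow 2 x).const_mul lam).sin).div_const (2 * lam)
  refine h.congr_deriv ?_
  field_simp
  ring

theorem hasDerivAt_neg_cos_mul_sq_div (hlam : lam ≠ 0) (x : ℝ) :
    HasDerivAt (fun z ↦ -Real.cos (lam * z ^ 2) / (2 * lam)) (x * Real.sin (lam * x ^ 2)) x := by
  have h := ((((hasDerivAt_pow 2 x).const_mul lam).cos).neg).div_const (2 * lam)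
  refine h.congr_deriv ?_
  field_simp
  ring

theorem integral_pow_add_two_mul_of_hasDerivAt {f g : ℝ → ℝ} (hf : Continuous f)
    (hv : ∀ x, HasDerivAt g (x * f x) x) :
    ∫ z in (0:ℝ)..b, z ^ (k + 2) * f z =
      b ^ (k + 1) * g b - (k + 1) * ∫ z in (0:ℝ)..b, z ^ k * g z := by
  have hu : ∀ x ∈ Set.uIcc (0:ℝ) b, HasDerivAt (fun z ↦ z ^ (k + 1)) ((k + 1) * x ^ k) x :=
    fun x _ ↦ by simpa using hasDerivAt_pow (k + 1) x
  have parts := integral_mul_deriv_eq_deriv_mul hu (fun x _ ↦ hv x)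
    ((continuous_const.mul (continuous_pow k)).intervalIntegrable 0 b)
    ((continuous_id.mul hf).intervalIntegrable 0 b)
  calc ∫ z in (0:ℝ)..b, z ^ (k + 2) * f z = ∫ z in (0:ℝ)..b, z ^ (k + 1) * (z * f z) := by
        congr 1 with z; ring
    _ = _ := by
        simp_rw [parts, zero_pow (Nat.succ_ne_zero k), zero_mul, sub_zero, mul_assoc,
          integral_const_mul]

theorem integral_pow_add_two_mul_cos_mul_sq (hlam : lam ≠ 0) :
    ∫ z in (0:ℝ)..b, z ^ (k + 2) * Real.cos (lam * z ^ 2) =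
      (b ^ (k + 1) * Real.sin (lam * b ^ 2)
        - (k + 1) * ∫ z in (0:ℝ)..b, z ^ k * Real.sin (lam * z ^ 2)) / (2 * lam) := by
  rw [integral_pow_add_two_mul_of_hasDerivAt b k (by fun_prop) (hasDerivAt_sin_mul_sq_div hlam)]
  simp_rw [mul_div_assoc', intervalIntegral.integral_div]
  ring

theorem integral_pow_add_two_mul_sin_mul_sq (hlam : lam ≠ 0) :
    ∫ z in (0:ℝ)..b, z ^ (k + 2) * Real.sin (lam * z ^ 2) =
      (-(b ^ (k + 1) * Real.cos (lam * b ^ 2))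
        + (k + 1) * ∫ z in (0:ℝ)..b, z ^ k * Real.cos (lam * z ^ 2)) / (2 * lam) := by
  rw [integral_pow_add_two_mul_of_hasDerivAt b k (by fun_prop)
    (hasDerivAt_neg_cos_mul_sq_div hlam)]
  simp_rw [mul_div_assoc', intervalIntegral.integral_div, mul_neg, intervalIntegral.integral_neg]
  ring

theorem integral_pow_add_four_mul_cos_mul_sq (hlam : lam ≠ 0) :
    ∫ z in (0:ℝ)..b, z ^ (k + 4) * Real.cos (lam * z ^ 2) =
      b ^ (k + 3) * Real.sin (lam * b ^ 2) / (2 * lam)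
        + (k + 3) * b ^ (k + 1) * Real.cos (lam * b ^ 2) / (4 * lam ^ 2)
        - (k + 1) * (k + 3) / (4 * lam ^ 2) * ∫ z in (0:ℝ)..b, z ^ k * Real.cos (lam * z ^ 2) := by
  rw [integral_pow_add_two_mul_cos_mul_sq b (k + 2) hlam,
    integral_pow_add_two_mul_sin_mul_sq b k hlam]
  push_cast
  field_simp
  ring

end Moments

theorem fresnelS_eq_mul_integral (c : ℝ) :
    fresnelS c = c * ∫ z in (0:ℝ)..1, Real.sin (π * c ^ 2 / 2 * z ^ 2) := by
  have h := smul_integral_comp_mul_left (a := 0) (b := 1) (fun t ↦ Real.sin (π * t ^ 2 / 2)) c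
  rw [mul_zero, mul_one, smul_eq_mul] at h
  rw [fresnelS, ← h]
  congr 2 with z
  ring_nf

theorem fresnelS_sqrt_two_mul_div_pi {lam : ℝ} (hlam : 0 ≤ lam) :
    fresnelS (√(2 * lam / π)) = √(2 * lam / π) * ∫ z in (0:ℝ)..1, Real.sin (lam * z ^ 2) := by
  rw [fresnelS_eq_mul_integral, sq_sqrt (by positivity)]
  congr 3 with z
  field_simp

/-- The right-hand side of the theorem with the Fresnel term `√(2/λ) S(√(2λ/π))` abstracted to
`A`, which the recurrence in `m` never touches. -/
noncomputable def cosMomentClosedForm (lam A : ℝ) (m : ℕ) : ℝ :=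
  ((-1 : ℝ) ^ (m + 1) * Real.Gamma (2 * m + 3 / 2) / (2 * lam ^ (2 * m + 1))) *
    (A + lam * Real.cos lam * ∑ j ∈ Finset.range m, (-(lam ^ 2)) ^ j / Real.Gamma (2 * j + 5 / 2)
      - Real.sin lam * ∑ j ∈ Finset.range (m + 1), (-(lam ^ 2)) ^ j / Real.Gamma (2 * j + 3 / 2))

theorem cosMomentClosedForm_succ {lam : ℝ} (hlam : lam ≠ 0) (A : ℝ) (m : ℕ) :
    cosMomentClosedForm lam A (m + 1) =
      Real.sin lam / (2 * lam) + (4 * m + 5) * Real.cos lam / (4 * lam ^ 2)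
        - (4 * m + 3) * (4 * m + 5) / (4 * lam ^ 2) * cosMomentClosedForm lam A m := by
  have hpos : 0 < 2 * (m : ℝ) + 3 / 2 := by positivity
  have hΓ₁ : Real.Gamma (2 * m + 5 / 2) = (2 * m + 3 / 2) * Real.Gamma (2 * m + 3 / 2) := by
    rw [← Real.Gamma_add_one hpos.ne']; ring_nf
  have hΓ₂ : Real.Gamma (2 * ↑(m + 1) + 3 / 2) = (2 * m + 5 / 2) * Real.Gamma (2 * m + 5 / 2) := by
    rw [← Real.Gamma_add_one (by positivity)]; push_cast; ring_nf
  have hΓ : Real.Gamma (2 * m + 3 / 2) ≠ 0 := (Real.Gamma_pos_of_pos hpos).ne'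
  unfold cosMomentClosedForm
  rw [sum_range_succ _ m, sum_range_succ _ (m + 1), hΓ₂, hΓ₁]
  have hpow : (-(lam ^ 2)) ^ m = (-1) ^ m * lam ^ (2 * m) := by rw [neg_pow, pow_mul]
  have hpow' : (-(lam ^ 2)) ^ (m + 1) = -((-1) ^ m * lam ^ (2 * m + 2)) := by
    rw [pow_succ, hpow]; ring
  rw [hpow, hpow', pow_succ (-1 : ℝ) (m + 1), pow_succ (-1 : ℝ) m]
  rcases neg_one_pow_eq_or ℝ m with hs | hs <;>
  · rw [hs]
    field_simp
    ring

theorem Real.Gamma_three_div_two : Real.Gamma (3 / 2) = √π / 2 := by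
  rw [show (3 / 2 : ℝ) = 1 / 2 + 1 by norm_num, Real.Gamma_add_one (by norm_num),
    Real.Gamma_one_half_eq]
  ring

theorem integral_sq_mul_cos_mul_sq {lam : ℝ} (hlam : 0 < lam) :
    ∫ z in (0:ℝ)..1, z ^ 2 * Real.cos (lam * z ^ 2) =
      cosMomentClosedForm lam (√(2 / lam) * fresnelS (√(2 * lam / π))) 0 := by
  have hsqrt : √(2 / lam) * √(2 * lam / π) = 2 / √π := by
    rw [← sqrt_mul (by positivity), show 2 / lam * (2 * lam / π) = 2 ^ 2 / π by field_simp,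
      sqrt_div' _ pi_pos.le, sqrt_sq zero_le_two]
  rw [integral_pow_add_two_mul_cos_mul_sq 1 0 hlam.ne', fresnelS_sqrt_two_mul_div_pi hlam.le,
    ← mul_assoc, hsqrt]
  simp only [cosMomentClosedForm, zero_add, one_pow, mul_one, one_mul, CharP.cast_eq_zero,
    pow_zero, pow_one, mul_zero, Real.Gamma_three_div_two, range_zero, sum_empty, range_one,
    sum_singleton]
  field_simp
  ring

theorem stmt_13 (lam : ℝ) (hlam : 0 < lam) (m : ℕ) :
    ∫ z in (0:ℝ)..1, z ^ (4 * m + 2) * Real.cos (lam * z ^ 2) =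
      ((-1 : ℝ) ^ (m + 1) * Real.Gamma (2 * m + 3 / 2) / (2 * lam ^ (2 * m + 1))) *
        (Real.sqrt (2 / lam) * fresnelS (Real.sqrt (2 * lam / π))
          + lam * Real.cos lam *
              ∑ j ∈ Finset.range m, (-(lam ^ 2)) ^ j / Real.Gamma (2 * j + 5 / 2)
          - Real.sin lam *
              ∑ j ∈ Finset.range (m + 1), (-(lam ^ 2)) ^ j / Real.Gamma (2 * j + 3 / 2)) := by
  change _ = cosMomentClosedForm lam (√(2 / lam) * fresnelS (√(2 * lam / π))) m
  induction m with
  | zero => exact integral_sq_mul_cos_mul_sq hlam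
  | succ m ih =>
    rw [show 4 * (m + 1) + 2 = 4 * m + 2 + 4 by ring,
      integral_pow_add_four_mul_cos_mul_sq 1 _ hlam.ne', ih, cosMomentClosedForm_succ hlam.ne']
    simp only [one_pow, mul_one]
    push_cast
    ring
end
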